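/- Let R be an associative unital ℂ-algebra, q, p ∈ R with qp − pq = h·1 (h ∈ ℂ), q invertible, and a, b, c, d, t ∈ ℂ. Put H_VI = q³p² − (1+t)q²p² − (a+b+c)q²p + tqp² + (b+c+(a+b)t)qp − d(a+b+c+d−h)q − btp, and set x = q⁻¹, y = −dq − q²p. Then: (i) xy − yx = h·1; and (ii) with H₀(x,y) = tx³y² − (1+t)x²y² + (b+2d−2h)tx²y + xy² + (−b−c−2d+2h−(a+b+2d−2h)t)xy + d(b+d−h)tx + (a+b+c+2d−2h)y (normally ordered, x-powers to the left), one has [x, H_VI] = [x, H₀(x,y)] and [y, H_VI] = [y, H₀(x,y)]. Hence the quantum Painlevé VI system is transformed in the chart-0 coordinates into the polynomial Hamiltonian system with Hamiltonian H₀. -/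

import Mathlib

/-!
Writing `u = q⁻¹` and `y = -dq - q²p`, the commutation rules `pq = qp - h` and
`pu = up + hu²` bring every monomial `uⁱyʲ` of `H₀` to normal order in `q, u, p`;
for instance `uy² = q³p² + (2d - 2h)q²p + d(d - h)q`. Collecting terms, the `u`-terms
cancel and `H_VI - H₀` is the scalar `-(d(b + c + d - h) + d(a + b + d - h)t)`, which
commutes with everything. Canonicity `uy - yu = h` is a direct computation of the same kind.
-/

section ChartZero

variable {k R : Type*} [CommRing k] [Ring R] [Algebra k R]

def chart0Y (d : k) (q p : R) : R := -(d • q) - q ^ 2 * p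

theorem commutator_sub_smul_one (c : k) (z w : R) :
    z * (w - c • 1) - (w - c • 1) * z = z * w - w * z := by
  rw [mul_sub, sub_mul, mul_smul_one, smul_one_mul]
  abel

variable {h d : k} {q p : R}

theorem mul_eq_sub_of_commutator (hcomm : q * p - p * q = h • 1) :
    p * q = q * p - h • 1 := by
  rw [← hcomm]; abel

theorem mul_mul_eq_sub_of_commutator (hcomm : q * p - p * q = h • 1) (z : R) :
    p * (q * z) = q * (p * z) - h • z := by
  rw [← mul_assoc, mul_eq_sub_of_commutator hcomm, sub_mul, mul_assoc, smul_one_mul]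

theorem mul_invOf_eq_add_of_commutator [Invertible q] (hcomm : q * p - p * q = h • 1) :
    p * ⅟q = ⅟q * p + h • ⅟q ^ 2 := by
  have : p * ⅟q - ⅟q * p = ⅟q * (q * p - p * q) * ⅟q := by
    simp only [mul_sub, sub_mul, mul_assoc, invOf_mul_cancel_left, mul_invOf_self, mul_one]
  rw [hcomm, mul_smul_one, smul_mul_assoc, ← sq, sub_eq_iff_eq_add'] at this
  exact this

variable (d) (q) [Invertible q]

theorem invOf_mul_chart0Y : ⅟q * chart0Y d q p = -(d • 1) - q * p := by
  simp only [chart0Y, mul_sub, mul_neg, mul_smul_comm, invOf_mul_self, sq, mul_assoc,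
    invOf_mul_cancel_left]

theorem invOf_sq_mul_chart0Y : ⅟q ^ 2 * chart0Y d q p = -(d • ⅟q) - p := by
  rw [sq, mul_assoc, invOf_mul_chart0Y]
  simp only [mul_sub, mul_neg, mul_smul_one, invOf_mul_cancel_left]

theorem invOf_mul_chart0Y_sub (hcomm : q * p - p * q = h • 1) :
    ⅟q * chart0Y d q p - chart0Y d q p * ⅟q = h • 1 := by
  rw [invOf_mul_chart0Y, chart0Y]
  simp only [sub_mul, neg_mul, smul_mul_assoc, mul_invOf_self, sq, mul_assoc,
    mul_invOf_eq_add_of_commutator hcomm, mul_add, mul_smul_comm, mul_invOf_cancel_left]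
  abel

theorem invOf_mul_chart0Y_sq (hcomm : q * p - p * q = h • 1) :
    ⅟q * chart0Y d q p ^ 2
      = q ^ 3 * p ^ 2 + (2 * d - 2 * h) • (q ^ 2 * p) + (d * (d - h)) • q := by
  rw [sq (chart0Y d q p), ← mul_assoc, invOf_mul_chart0Y, chart0Y]
  simp only [pow_succ', pow_zero, mul_one, sub_mul, mul_sub, neg_mul, mul_neg, smul_mul_assoc,
    mul_smul_comm, one_mul, mul_assoc, mul_eq_sub_of_commutator hcomm,
    mul_mul_eq_sub_of_commutator hcomm]
  module

theorem invOf_sq_mul_chart0Y_sq (hcomm : q * p - p * q = h • 1) :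
    ⅟q ^ 2 * chart0Y d q p ^ 2
      = q ^ 2 * p ^ 2 + (2 * d - 2 * h) • (q * p) + (d * (d - h)) • 1 := by
  rw [sq (⅟q), mul_assoc, invOf_mul_chart0Y_sq d q hcomm]
  simp only [mul_add, mul_smul_comm, pow_succ' q, pow_zero, one_mul, mul_assoc,
    invOf_mul_cancel_left, invOf_mul_self]

theorem invOf_cube_mul_chart0Y_sq (hcomm : q * p - p * q = h • 1) :
    ⅟q ^ 3 * chart0Y d q p ^ 2
      = q * p ^ 2 + (2 * d - 2 * h) • p + (d * (d - h)) • ⅟q := by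
  rw [pow_succ', mul_assoc, invOf_sq_mul_chart0Y_sq d q hcomm]
  simp only [mul_add, mul_smul_comm, sq q, mul_assoc, invOf_mul_cancel_left, mul_one]

end ChartZero

/-- The Takano chart-0 transformation `x = q⁻¹`, `y = -dq - q²p` for quantum
Painlevé VI is canonical, and it transforms the system into the polynomial
Hamiltonian system with Hamiltonian
`H₀ = tx³y² - (1+t)x²y² + (b+2d-2h)tx²y + xy²
      + (-b-c-2d+2h-(a+b+2d-2h)t)xy + d(b+d-h)tx + (a+b+c+2d-2h)y`. -/
theorem quantum_PVI_chart0_hamiltonian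
    {R : Type*} [Ring R] [Algebra ℂ R]
    (h a b c d t : ℂ) (q p : R) [Invertible q]
    (hcomm : q * p - p * q = h • (1 : R))
    (H x y H₀ : R)
    (hH : H = q ^ 3 * p ^ 2 - (1 + t) • (q ^ 2 * p ^ 2)
        - (a + b + c) • (q ^ 2 * p) + t • (q * p ^ 2)
        + (b + c + (a + b) * t) • (q * p)
        - (d * (a + b + c + d - h)) • q - (b * t) • p)
    (hx : x = ⅟q) (hy : y = -(d • q) - q ^ 2 * p)
    (hH₀ : H₀ = t • (x ^ 3 * y ^ 2) - (1 + t) • (x ^ 2 * y ^ 2)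
        + ((b + 2 * d - 2 * h) * t) • (x ^ 2 * y) + x * y ^ 2
        + (-b - c - 2 * d + 2 * h - (a + b + 2 * d - 2 * h) * t) • (x * y)
        + (d * (b + d - h) * t) • x + (a + b + c + 2 * d - 2 * h) • y) :
    x * y - y * x = h • (1 : R) ∧
    x * H - H * x = x * H₀ - H₀ * x ∧
    y * H - H * y = y * H₀ - H₀ * y := by
  replace hy : y = chart0Y d q p := hy
  subst hx hy
  have hH_sub : H = H₀ - (d * (b + c + d - h) + d * (a + b + d - h) * t) • 1 := by
    rw [hH, hH₀, invOf_cube_mul_chart0Y_sq d q hcomm, invOf_sq_mul_chart0Y_sq d q hcomm,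
      invOf_sq_mul_chart0Y, invOf_mul_chart0Y_sq d q hcomm, invOf_mul_chart0Y, chart0Y]
    module
  rw [hH_sub, commutator_sub_smul_one, commutator_sub_smul_one]
  exact ⟨invOf_mul_chart0Y_sub d q hcomm, rfl, rfl⟩
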